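/- With P_h and V_h(s) = ∑_{p ∈ P_h} (p−1)^{-s} as defined, for every h ≥ 1 and every s with 0 < s ≤ 1, V_h(s) is finite; moreover V_h(s) ≤ exp(λ(s) V_{h−1}(s)) for h ≥ 2, where λ(s) = 1/(2^s−1). -/

import Mathlib

/-!
Every `p ∈ P_h` has `p - 1` factored over primes of `P_{h-1}`, so a finite partial sum of `V_h`
is at most an Euler product `∏ (1 - q^{-s})⁻¹` over finitely many `q ∈ P_{h-1}`. Concavity of
`t ↦ t^s` gives `(2^s - 1)(q - 1)^s ≤ q^s - 1`, that is
`(1 - q^{-s})⁻¹ ≤ 1 + λ(s)(q - 1)^{-s} ≤ exp(λ(s)(q - 1)^{-s})`, so the Euler product is at most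
`exp(λ(s) V_{h-1})`. Finiteness follows by induction on `h`, starting from the empty `P_0`.
-/

open Finset

lemma ConcaveOn.add_le_add_of_add_eq {I : Set ℝ} {f : ℝ → ℝ} (hf : ConcaveOn ℝ I f)
    {a b c d : ℝ} (ha : a ∈ I) (hd : d ∈ I) (hab : a ≤ b) (hbd : b ≤ d) (habcd : a + d = b + c) :
    f a + f d ≤ f b + f c := by
  rcases (hab.trans hbd).eq_or_lt with had | had
  · rw [show b = a by linarith, show c = d by linarith]
  -- `b` and `c` are the convex combinations of `a` and `d` with weights `(θ, 1 - θ)` swapped.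
  set θ := (d - b) / (d - a)
  have hθ : θ * (d - a) = d - b := div_mul_cancel₀ _ (sub_ne_zero.mpr had.ne')
  have hθ0 : 0 ≤ θ := div_nonneg (by linarith) (by linarith)
  have hθ1 : θ ≤ 1 := div_le_one_of_le₀ (by linarith) (by linarith)
  have hb := hf.2 ha hd hθ0 (sub_nonneg.mpr hθ1) (add_sub_cancel θ 1)
  have hc := hf.2 ha hd (sub_nonneg.mpr hθ1) hθ0 (sub_add_cancel 1 θ)
  simp only [smul_eq_mul] at hb hc
  rw [show θ * a + (1 - θ) * d = b by linear_combination -hθ] at hb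
  rw [show (1 - θ) * a + θ * d = c by linear_combination hθ + habcd] at hc
  linarith

lemma two_rpow_sub_one_mul_rpow_le {s y : ℝ} (hs0 : 0 ≤ s) (hs1 : s ≤ 1) (hy : 1 ≤ y) :
    (2 ^ s - 1) * y ^ s ≤ (y + 1) ^ s - 1 := by
  have h := (Real.concaveOn_rpow hs0 hs1).add_le_add_of_add_eq (b := y) (c := y + 1)
    (Set.mem_Ici.mpr zero_le_one) (Set.mem_Ici.mpr (by linarith : (0:ℝ) ≤ 2 * y)) hy
    (by linarith) (by ring)
  rw [Real.one_rpow, Real.mul_rpow zero_le_two (by linarith)] at h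
  linarith

lemma one_sub_rpow_neg_inv_le_exp {s x : ℝ} (hs0 : 0 < s) (hs1 : s ≤ 1) (hx : 2 ≤ x) :
    (1 - x ^ (-s))⁻¹ ≤ Real.exp (1 / (2 ^ s - 1) * (x - 1) ^ (-s)) := by
  have h2s : 1 < (2 : ℝ) ^ s := Real.one_lt_rpow one_lt_two hs0
  have hys : 0 < (x - 1) ^ s := Real.rpow_pos_of_pos (by linarith) s
  have hkey := two_rpow_sub_one_mul_rpow_le hs0.le hs1 (by linarith : 1 ≤ x - 1)
  rw [sub_add_cancel] at hkey
  have hxs : 0 < x ^ s - 1 := by nlinarith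
  calc (1 - x ^ (-s))⁻¹ = 1 + (x ^ s - 1)⁻¹ := by
        rw [Real.rpow_neg (by linarith)]
        field_simp
        ring
    _ ≤ 1 + ((2 ^ s - 1) * (x - 1) ^ s)⁻¹ := by gcongr
    _ = 1 / (2 ^ s - 1) * (x - 1) ^ (-s) + 1 := by
        rw [Real.rpow_neg (by linarith), mul_inv, one_div, add_comm]
    _ ≤ Real.exp (1 / (2 ^ s - 1) * (x - 1) ^ (-s)) := Real.add_one_le_exp _

noncomputable def natCastRpowHom (t : ℝ) : ℕ →* ℝ where
  toFun n := (n : ℝ) ^ t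
  map_one' := by simp
  map_mul' m n := by push_cast; exact Real.mul_rpow m.cast_nonneg n.cast_nonneg

lemma Finset.sum_le_hasSum_subtype {α : Type*} {π : α → Prop} {g : α → ℝ} {a : ℝ}
    (G : Finset α) (hG : ∀ x ∈ G, π x) (hg : ∀ x : Subtype π, 0 ≤ g x)
    (h : HasSum (fun x : Subtype π => g x) a) : ∑ x ∈ G, g x ≤ a := by
  classical
  rw [← Finset.sum_subtype_of_mem g hG]
  exact sum_le_hasSum _ (fun x _ => hg x) h

lemma sum_rpow_neg_le_prod_primeFactors {s : ℝ} (hs : 0 < s) {G : Finset ℕ} (hG : 0 ∉ G) :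
    ∑ n ∈ G, (n : ℝ) ^ (-s) ≤ ∏ q ∈ G.biUnion Nat.primeFactors, (1 - (q : ℝ) ^ (-s))⁻¹ := by
  set Q := G.biUnion Nat.primeFactors
  have hQ : ∀ q ∈ Q, q.Prime := fun q hq =>
    have ⟨_, _, hq⟩ := mem_biUnion.mp hq
    Nat.prime_of_mem_primeFactors hq
  have hlt {p : ℕ} (hp : p.Prime) : ‖natCastRpowHom (-s) p‖ < 1 := by
    change ‖(p : ℝ) ^ (-s)‖ < 1
    rw [Real.norm_of_nonneg (Real.rpow_nonneg p.cast_nonneg _)]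
    exact Real.rpow_lt_one_of_one_lt_of_neg (by exact_mod_cast hp.one_lt) (neg_lt_zero.mpr hs)
  have hEuler :=
    (EulerProduct.summable_and_hasSum_factoredNumbers_prod_filter_prime_geometric hlt Q).2
  rw [filter_true_of_mem hQ] at hEuler
  refine G.sum_le_hasSum_subtype (fun n hn => ?_) (fun n => Real.rpow_nonneg n.1.cast_nonneg _)
    hEuler
  exact Nat.mem_factoredNumbers_of_primeFactors_subset (ne_of_mem_of_not_mem hn hG)
    (subset_biUnion_of_mem _ hn)

lemma Nat.Prime.sub_one_rpow_nonneg {p : ℕ} (hp : p.Prime) (t : ℝ) : 0 ≤ ((p : ℝ) - 1) ^ t :=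
  Real.rpow_nonneg (sub_nonneg.mpr (by exact_mod_cast hp.one_lt.le)) t

section PrattHeight

variable {P : Set ℕ} {H : ℕ → ℕ}

lemma one_le_prattHeight (hH2 : H 2 = 1)
    (hrec : ∀ p : ℕ, Nat.Prime p → 2 < p → H p = 1 + (p - 1).primeFactors.sup H)
    {p : ℕ} (hp : p.Prime) : 1 ≤ H p := by
  rcases hp.two_le.eq_or_lt with rfl | h2p
  · exact hH2.ge
  · rw [hrec p hp h2p]
    exact Nat.le_add_right 1 _

lemma prattHeight_lt_of_mem_primeFactors_sub_one
    (hrec : ∀ p : ℕ, Nat.Prime p → 2 < p → H p = 1 + (p - 1).primeFactors.sup H)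
    {p q : ℕ} (hp : p.Prime) (hq : q ∈ (p - 1).primeFactors) : H q < H p := by
  have h2p : 2 < p := by
    have := Nat.le_of_dvd (Nat.pos_of_ne_zero (Nat.mem_primeFactors.mp hq).2.2)
      (Nat.dvd_of_mem_primeFactors hq)
    have := (Nat.prime_of_mem_primeFactors hq).two_le
    omega
  rw [hrec p hp h2p]
  exact Nat.lt_one_add_iff.mpr (le_sup hq)

lemma sum_sub_one_rpow_neg_le_exp (hP : ∀ p ∈ P, Nat.Prime p)
    (hclo : ∀ p ∈ P, ∀ q : ℕ, Nat.Prime q → q ∣ p - 1 → q ∈ P)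
    (hrec : ∀ p : ℕ, Nat.Prime p → 2 < p → H p = 1 + (p - 1).primeFactors.sup H)
    {s : ℝ} (hs0 : 0 < s) (hs1 : s ≤ 1) {h h' : ℕ} (hh : h ≤ h' + 1)
    (hsum : Summable fun p : {p : ℕ // p ∈ P ∧ H p ≤ h'} => (((p : ℕ) : ℝ) - 1) ^ (-s))
    (F : Finset {p : ℕ // p ∈ P ∧ H p ≤ h}) :
    ∑ p ∈ F, (((p : ℕ) : ℝ) - 1) ^ (-s) ≤
      Real.exp (1 / (2 ^ s - 1) *
        ∑' p : {p : ℕ // p ∈ P ∧ H p ≤ h'}, (((p : ℕ) : ℝ) - 1) ^ (-s)) := by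
  have htwo (p : {p : ℕ // p ∈ P ∧ H p ≤ h}) : 2 ≤ (p : ℕ) := (hP p p.2.1).two_le
  set G := F.image fun p : {p : ℕ // p ∈ P ∧ H p ≤ h} => (p : ℕ) - 1
  set Q := G.biUnion Nat.primeFactors
  have hG : 0 ∉ G := by
    simp only [G, mem_image, not_exists, not_and]
    exact fun p _ => by have := htwo p; omega
  have hQ : ∀ q ∈ Q, q ∈ P ∧ H q ≤ h' := by
    intro q hq
    obtain ⟨_, hn, hq⟩ := mem_biUnion.mp hq
    obtain ⟨⟨p, hp, hph⟩, -, rfl⟩ := mem_image.mp hn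
    have := prattHeight_lt_of_mem_primeFactors_sub_one hrec (hP p hp) hq
    exact ⟨hclo p hp q (Nat.prime_of_mem_primeFactors hq) (Nat.dvd_of_mem_primeFactors hq),
      by omega⟩
  have hlam : 0 ≤ 1 / ((2 : ℝ) ^ s - 1) :=
    one_div_nonneg.mpr (sub_nonneg.mpr (Real.one_le_rpow one_le_two hs0.le))
  calc ∑ p ∈ F, (((p : ℕ) : ℝ) - 1) ^ (-s) = ∑ n ∈ G, (n : ℝ) ^ (-s) := by
        rw [sum_image fun p _ p' _ hpp' => Subtype.ext (by
          have := htwo p; have := htwo p'; omega)]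
        refine sum_congr rfl fun p _ => ?_
        rw [Nat.cast_sub (by have := htwo p; omega), Nat.cast_one]
    _ ≤ ∏ q ∈ Q, (1 - (q : ℝ) ^ (-s))⁻¹ := sum_rpow_neg_le_prod_primeFactors hs0 hG
    _ ≤ ∏ q ∈ Q, Real.exp (1 / (2 ^ s - 1) * ((q : ℝ) - 1) ^ (-s)) := by
        refine prod_le_prod (fun q hq => ?_) (fun q hq => ?_)
        · have : (q : ℝ) ^ (-s) < 1 := Real.rpow_lt_one_of_one_lt_of_neg
            (by exact_mod_cast (hP q (hQ q hq).1).one_lt) (neg_lt_zero.mpr hs0)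
          exact inv_nonneg.mpr (by linarith)
        · exact one_sub_rpow_neg_inv_le_exp hs0 hs1
            (by exact_mod_cast (hP q (hQ q hq).1).two_le)
    _ = Real.exp (1 / (2 ^ s - 1) * ∑ q ∈ Q, ((q : ℝ) - 1) ^ (-s)) := by
        rw [← Real.exp_sum, mul_sum]
    _ ≤ _ := by
        gcongr
        exact Q.sum_le_hasSum_subtype hQ (fun p => (hP p.1 p.2.1).sub_one_rpow_nonneg _)
          hsum.hasSum

lemma summable_sub_one_rpow_neg (hP : ∀ p ∈ P, Nat.Prime p)
    (hclo : ∀ p ∈ P, ∀ q : ℕ, Nat.Prime q → q ∣ p - 1 → q ∈ P) (hH2 : H 2 = 1)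
    (hrec : ∀ p : ℕ, Nat.Prime p → 2 < p → H p = 1 + (p - 1).primeFactors.sup H)
    {s : ℝ} (hs0 : 0 < s) (hs1 : s ≤ 1) (h : ℕ) :
    Summable fun p : {p : ℕ // p ∈ P ∧ H p ≤ h} => (((p : ℕ) : ℝ) - 1) ^ (-s) := by
  induction h with
  | zero =>
    have : IsEmpty {p : ℕ // p ∈ P ∧ H p ≤ 0} :=
      ⟨fun ⟨p, hp, hp0⟩ => by have := one_le_prattHeight hH2 hrec (hP p hp); omega⟩
    exact .of_finite
  | succ h ih =>
    exact summable_of_sum_le (fun p => (hP p.1 p.2.1).sub_one_rpow_nonneg _)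
      (sum_sub_one_rpow_neg_le_exp hP hclo hrec hs0 hs1 le_rfl ih)

end PrattHeight

theorem stmt_9 (P : Set ℕ) (hP : ∀ p ∈ P, Nat.Prime p)
    (hclo : ∀ p ∈ P, ∀ q : ℕ, Nat.Prime q → q ∣ p - 1 → q ∈ P)
    (H : ℕ → ℕ) (hH2 : H 2 = 1)
    (hrec : ∀ p : ℕ, Nat.Prime p → 2 < p → H p = 1 + (p - 1).primeFactors.sup H)
    (s : ℝ) (hs0 : 0 < s) (hs1 : s ≤ 1) :
    (∀ h : ℕ, 1 ≤ h →
      Summable fun p : {p : ℕ // p ∈ P ∧ H p ≤ h} => (((p : ℕ) : ℝ) - 1) ^ (-s)) ∧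
    (∀ h : ℕ, 2 ≤ h →
      (∑' p : {p : ℕ // p ∈ P ∧ H p ≤ h}, (((p : ℕ) : ℝ) - 1) ^ (-s)) ≤
        Real.exp ((1 / ((2 : ℝ) ^ s - 1)) *
          ∑' p : {p : ℕ // p ∈ P ∧ H p ≤ h - 1}, (((p : ℕ) : ℝ) - 1) ^ (-s))) :=
  ⟨fun h _ => summable_sub_one_rpow_neg hP hclo hH2 hrec hs0 hs1 h,
    fun h hh => tsum_le_of_sum_le' (Real.exp_pos _).le <|
      sum_sub_one_rpow_neg_le_exp hP hclo hrec hs0 hs1 (by omega)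
        (summable_sub_one_rpow_neg hP hclo hH2 hrec hs0 hs1 (h - 1))⟩
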